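/- arXiv:1511.01303 — 4 statements merged into one kernel-verified Lean document; each statement's English description precedes it below -/
import Mathlib

section
/- For u ∈ ℝ^m and v ∈ ℝ^m with P_H(u) ≠ 0, the following are equivalent: (i) for all Δ ∈ H, ⟨u, Δ⟩ ≥ 0 implies ⟨v, Δ⟩ ≥ 0; (ii) v = a·u + b·𝟏 for some a ≥ 0, b ∈ ℝ. (Here H = {Δ : ∑ Δⱼ = 0} and P_H is orthogonal projection onto H.) -/
/-!
A linear functional `g` that is nonnegative wherever `f` is must vanish on `ker f`, hence is a
multiple `a • f`, and testing at a point where `f > 0` gives `a ≥ 0`. Applied on the hyperplane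
`H = ker ⟨𝟏, ·⟩` to `f = ⟨u, ·⟩` and `g = ⟨v, ·⟩`, this leaves `⟨v - a • u, ·⟩` vanishing on `H`,
so `v - a • u` is a multiple of `𝟏`.
-/

namespace LinearMap

variable {𝕜 V : Type*} [Field 𝕜] [AddCommGroup V] [Module 𝕜 V]

theorem exists_smul_eq_of_ker_le {f g : V →ₗ[𝕜] 𝕜} (hker : ker f ≤ ker g) :
    ∃ a : 𝕜, g = a • f := by
  have hspan := mem_span_of_iInf_ker_le_ker (L := fun _ : Unit ↦ f) (by simpa using hker)
  rw [Set.range_const, Submodule.mem_span_singleton] at hspan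
  obtain ⟨a, rfl⟩ := hspan
  exact ⟨a, rfl⟩

variable [LinearOrder 𝕜] [IsStrictOrderedRing 𝕜]

theorem exists_nonneg_smul_eq_of_nonneg_imp_nonneg {f g : V →ₗ[𝕜] 𝕜}
    (hfg : ∀ x, 0 ≤ f x → 0 ≤ g x) : ∃ a : 𝕜, 0 ≤ a ∧ g = a • f := by
  have hker : ker f ≤ ker g := fun x hx ↦ by
    rw [mem_ker] at hx ⊢
    have h₁ := hfg x hx.ge
    have h₂ := hfg (-x) (by simp [hx])
    rw [map_neg, neg_nonneg] at h₂
    exact le_antisymm h₂ h₁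
  obtain ⟨a, rfl⟩ := exists_smul_eq_of_ker_le hker
  by_cases hf : f = 0
  · exact ⟨0, le_rfl, by simp [hf]⟩
  obtain ⟨x, hx⟩ : ∃ x, 0 < f x := by
    obtain ⟨x, hx⟩ : ∃ x, f x ≠ 0 := by
      by_contra! hzero
      exact hf (ext hzero)
    rcases hx.lt_or_gt with hneg | hpos
    · exact ⟨-x, by simpa using hneg⟩
    · exact ⟨x, hpos⟩
  exact ⟨a, nonneg_of_mul_nonneg_left (hfg x hx.le) hx, rfl⟩

theorem nonneg_imp_nonneg_on_ker_iff {f g h : V →ₗ[𝕜] 𝕜} :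
    (∀ x, h x = 0 → 0 ≤ f x → 0 ≤ g x) ↔ ∃ a b : 𝕜, 0 ≤ a ∧ g = a • f + b • h := by
  constructor
  · intro hfg
    obtain ⟨a, ha, hres⟩ := exists_nonneg_smul_eq_of_nonneg_imp_nonneg
      (f := f.domRestrict (ker h)) (g := g.domRestrict (ker h)) fun x ↦ hfg x x.2
    obtain ⟨b, hb⟩ := exists_smul_eq_of_ker_le (f := h) (g := g - a • f) fun x hx ↦ by
      simpa [sub_eq_zero] using LinearMap.congr_fun hres ⟨x, hx⟩
    exact ⟨a, b, ha, by rw [← hb, add_sub_cancel]⟩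
  · rintro ⟨a, b, ha, rfl⟩ x hx hfx
    simpa [hx] using mul_nonneg ha hfx

end LinearMap

theorem halfspace_inclusion_iff_nonneg_combination_general (m : ℕ)
    (u v : Fin m → ℝ) :
    (∀ Δ : Fin m → ℝ, (∑ j, Δ j) = 0 →
        0 ≤ ∑ j, u j * Δ j → 0 ≤ ∑ j, v j * Δ j) ↔
    (∃ a b : ℝ, 0 ≤ a ∧ v = a • u + b • (1 : Fin m → ℝ)) := by
  let E := dotProductEquiv ℝ (Fin m)
  have key := LinearMap.nonneg_imp_nonneg_on_ker_iff (f := E u) (g := E v) (h := E 1)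
  simp only [← map_smul, ← map_add, E.injective.eq_iff, E, dotProductEquiv_apply_apply,
    one_dotProduct] at key
  exact key

theorem halfspace_inclusion_iff_nonneg_combination (m : ℕ) (hm : 2 ≤ m)
    (u v : Fin m → ℝ)
    (hu : u - ((∑ i, u i) / (m : ℝ)) • (1 : Fin m → ℝ) ≠ 0) :
    (∀ Δ : Fin m → ℝ, (∑ j, Δ j) = 0 →
        0 ≤ ∑ j, u j * Δ j → 0 ≤ ∑ j, v j * Δ j) ↔
    (∃ a b : ℝ, 0 ≤ a ∧ v = a • u + b • (1 : Fin m → ℝ)) :=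
  halfspace_inclusion_iff_nonneg_combination_general m u v
end

section
/- If an inner product φ on a finite-dimensional real vector space V makes the vectors w₁,…,w_m of a regular simplex (∑wⱼ = 0, any m−1 of them a basis) have equal pairwise φ-distances and equal φ-norms, and φ₀ is another inner product with the same property for the same vectors, and dim V = m − 1, then φ = λ·φ₀ for some λ > 0. -/
/-!
The two Gram matrices of a regular simplex are forced up to scale: symmetry turns the constant
distance into a constant off-diagonal entry `e`, and pairing `∑ⱼ wⱼ = 0` with `wᵢ` gives
`c + (m - 1) e = 0`. Hence `φ (wᵢ) (wⱼ) = (c / c₀) φ₀ (wᵢ) (wⱼ)` for all `i, j`, and the `wᵢ` span `V`.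
-/

open Module Submodule

theorem LinearMap.ext_on_range₂ {R M ι : Type*} [CommSemiring R] [AddCommMonoid M] [Module R M]
    {v : ι → M} (hv : span R (Set.range v) = ⊤) {B B' : M →ₗ[R] M →ₗ[R] R}
    (h : ∀ i j, B (v i) (v j) = B' (v i) (v j)) : B = B' :=
  LinearMap.ext_on_range hv fun i => LinearMap.ext_on_range hv fun j => h i j

section Gram

variable {ι V : Type*} [AddCommGroup V] [Module ℝ V] {ψ : V →ₗ[ℝ] V →ₗ[ℝ] ℝ}

theorem apply_sub_sub_of_symm (hψ : ∀ x y, ψ x y = ψ y x) (x y : V) :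
    ψ (x - y) (x - y) = ψ x x + ψ y y - 2 * ψ x y := by
  simp only [map_sub, LinearMap.sub_apply, hψ y x]
  ring

theorem apply_eq_of_sq_dist_eq (hψ : ∀ x y, ψ x y = ψ y x) {w : ι → V} {c d : ℝ}
    (hc : ∀ i, ψ (w i) (w i) = c) (hd : ∀ i j, i ≠ j → ψ (w i - w j) (w i - w j) = d)
    {i j : ι} (hij : i ≠ j) : ψ (w i) (w j) = c - d / 2 := by
  have := hd i j hij
  rw [apply_sub_sub_of_symm hψ, hc, hc] at this
  linarith

theorem add_card_sub_one_mul_eq_zero_of_sum_eq_zero [Fintype ι] {w : ι → V} (hsum : ∑ j, w j = 0)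
    {c e : ℝ} (hc : ∀ i, ψ (w i) (w i) = c) (he : ∀ i j, i ≠ j → ψ (w i) (w j) = e) (i : ι) :
    c + (Fintype.card ι - 1) * e = 0 := by
  classical
  have h : ∑ j, ψ (w i) (w j) = 0 := by rw [← map_sum, hsum, map_zero]
  rwa [← Finset.add_sum_erase _ _ (Finset.mem_univ i), hc,
    Finset.sum_congr rfl fun j hj => he i j (Finset.ne_of_mem_erase hj).symm, Finset.sum_const,
    Finset.card_erase_of_mem (Finset.mem_univ i), Finset.card_univ, nsmul_eq_mul,
    Nat.cast_pred (Fintype.card_pos_iff.mpr ⟨i⟩)] at h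

theorem apply_eq_mul_of_regular_simplex [Fintype ι] [DecidableEq ι] (hψ : ∀ x y, ψ x y = ψ y x)
    {w : ι → V} (hsum : ∑ j, w j = 0) {c d : ℝ} (hc : ∀ i, ψ (w i) (w i) = c)
    (hd : ∀ i j, i ≠ j → ψ (w i - w j) (w i - w j) = d) (i j : ι) :
    ψ (w i) (w j) = c * if i = j then 1 else -1 / ((Fintype.card ι : ℝ) - 1) := by
  split_ifs with hij
  · rw [hij, hc, mul_one]
  have hrel := add_card_sub_one_mul_eq_zero_of_sum_eq_zero hsum hc
    (fun _ _ => apply_eq_of_sq_dist_eq hψ hc hd) i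
  have hcard : (Fintype.card ι : ℝ) - 1 ≠ 0 := by
    have : 1 < Fintype.card ι := Fintype.one_lt_card_iff.mpr ⟨i, j, hij⟩
    rw [sub_ne_zero]
    exact_mod_cast this.ne'
  rw [apply_eq_of_sq_dist_eq hψ hc hd hij]
  field_simp
  linarith

end Gram

theorem span_range_eq_top_of_linearIndependent_compl {ι V : Type*} [Fintype ι] [AddCommGroup V]
    [Module ℝ V] [FiniteDimensional ℝ V] {w : ι → V} (j : ι)
    (hli : LinearIndependent ℝ fun i : {i // i ≠ j} => w i)
    (hdim : finrank ℝ V = Fintype.card ι - 1) : span ℝ (Set.range w) = ⊤ := by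
  classical
  refine top_unique ?_
  rw [← hli.span_eq_top_of_card_eq_finrank' (by simp [Fintype.card_subtype_compl, hdim])]
  exact span_mono (Set.range_subset_iff.mpr fun i => ⟨i, rfl⟩)

theorem inner_products_on_regular_simplex_proportional
    (m : ℕ) (hm : 3 ≤ m)
    (V : Type*) [AddCommGroup V] [Module ℝ V] [FiniteDimensional ℝ V]
    (hdim : Module.finrank ℝ V = m - 1)
    (w : Fin m → V)
    (hsum : (∑ j, w j) = 0)
    (hbasis : ∀ j : Fin m, LinearIndependent ℝ
      (fun i : {i : Fin m // i ≠ j} => w i.1))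
    (φ φ₀ : V →ₗ[ℝ] V →ₗ[ℝ] ℝ)
    (hφsymm : ∀ x y, φ x y = φ y x)
    (hφpos : ∀ x, x ≠ 0 → 0 < φ x x)
    (hφ₀symm : ∀ x y, φ₀ x y = φ₀ y x)
    (hφ₀pos : ∀ x, x ≠ 0 → 0 < φ₀ x x)
    (hφnorm : ∃ c : ℝ, ∀ i, φ (w i) (w i) = c)
    (hφdist : ∃ d : ℝ, ∀ i j, i ≠ j → φ (w i - w j) (w i - w j) = d)
    (hφ₀norm : ∃ c : ℝ, ∀ i, φ₀ (w i) (w i) = c)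
    (hφ₀dist : ∃ d : ℝ, ∀ i j, i ≠ j → φ₀ (w i - w j) (w i - w j) = d) :
    ∃ lam : ℝ, 0 < lam ∧ ∀ x y, φ x y = lam * φ₀ x y := by
  obtain ⟨c, hc⟩ := hφnorm
  obtain ⟨d, hd⟩ := hφdist
  obtain ⟨c₀, hc₀⟩ := hφ₀norm
  obtain ⟨d₀, hd₀⟩ := hφ₀dist
  let i₀ : Fin m := ⟨0, by omega⟩
  have hw : w i₀ ≠ 0 := (hbasis ⟨1, by omega⟩).ne_zero ⟨i₀, by simp [i₀, Fin.ext_iff]⟩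
  have hc_pos : 0 < c := hc i₀ ▸ hφpos _ hw
  have hc₀_pos : 0 < c₀ := hc₀ i₀ ▸ hφ₀pos _ hw
  have hspan := span_range_eq_top_of_linearIndependent_compl i₀ (hbasis i₀) (by simpa using hdim)
  have heq : φ = (c / c₀) • φ₀ := LinearMap.ext_on_range₂ hspan fun i j => by
    rw [LinearMap.smul_apply, LinearMap.smul_apply, smul_eq_mul,
      apply_eq_mul_of_regular_simplex hφsymm hsum hc hd,
      apply_eq_mul_of_regular_simplex hφ₀symm hsum hc₀ hd₀]
    field_simp
  exact ⟨c / c₀, div_pos hc_pos hc₀_pos, fun x y => by simp [heq]⟩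
end

section
/- A bijection of the real projective space P(ℝⁿ) (n ≥ 3) sending projective lines to projective lines is induced by a linear automorphism of ℝⁿ. -/
/-!
A collineation `Ψ` extends to the map `P ↦ ⨆ {Ψ [v] | v ∈ P}` on subspaces, left adjoint to
`R ↦ {v | Ψ [v] ≤ R}`. Since `Ψ` is onto and cannot raise dimension (the images of a basis of `P`
span the image of `P`), the two maps are mutually inverse order automorphisms of the lattice of
subspaces. Such an automorphism `e` carries the frame `([b i], [∑ b i])` of a basis `b` to the frame
of another basis `b'`, and along each coordinate line `e [b i + x b j] = [b' i + σ x b' j]`.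
Writing sums and products of coordinates as meets of lines through known points shows that `σ` is a
ring endomorphism of the field, hence the identity over `ℝ`; an induction on the support of `v`
then gives `e [v] = [Λ v]` for the linear map `Λ` sending `b` to `b'`.
-/

open Module Submodule

section Meet

variable {K V : Type*} [Field K] [AddCommGroup V] [Module K V]

theorem mem_span_singleton_sup_span_singleton {a c x : V} :
    x ∈ K ∙ a ⊔ K ∙ c ↔ ∃ α β : K, α • a + β • c = x := by
  rw [← span_insert, mem_span_pair]

theorem span_singleton_sup_inf_eq (φ : V →ₗ[K] K) {a c x : V} {Q : Submodule K V}
    (hQ : Q ≤ LinearMap.ker φ) (ha : φ a ≠ 0) (hx : φ a • c - φ c • a = x) (hxQ : x ∈ Q) :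
    (K ∙ a ⊔ K ∙ c) ⊓ Q = K ∙ x := by
  refine le_antisymm ?_ (le_inf ?_ ((span_singleton_le_iff_mem _ _).2 hxQ))
  · rintro y ⟨hy, hyQ⟩
    obtain ⟨α, β, rfl⟩ := mem_span_singleton_sup_span_singleton.1 hy
    have hφ : α * φ a + β * φ c = 0 := by simpa using hQ hyQ
    have hscaled : φ a • (α • a + β • c) = β • x := by
      rw [← hx]; linear_combination (norm := module) hφ • a
    rw [← inv_smul_smul₀ ha (α • a + β • c), hscaled, smul_smul]
    exact smul_mem _ _ (mem_span_singleton_self x)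
  · rw [span_singleton_le_iff_mem, mem_span_singleton_sup_span_singleton]
    exact ⟨-φ c, φ a, by rw [← hx]; module⟩

end Meet

abbrev ProjPoint (K V : Type*) [Field K] [AddCommGroup V] [Module K V] :=
  {W : Submodule K V // finrank K W = 1}

namespace ProjPoint

variable {K V : Type*} [Field K] [AddCommGroup V] [Module K V]

variable (K) in
def mk (v : V) (hv : v ≠ 0) : ProjPoint K V := ⟨K ∙ v, finrank_span_singleton hv⟩

theorem exists_eq_mk (p : ProjPoint K V) : ∃ v, ∃ hv : v ≠ 0, p = mk K v hv := by
  obtain ⟨v, hv, hpv⟩ := (atom_iff_nonzero_span p.1).1 (isAtom_iff_finrank_eq_one.2 p.2)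
  exact ⟨v, hv, Subtype.ext hpv⟩

theorem mk_eq_mk_of_mem {u v : V} (hu : u ≠ 0) (hv : v ≠ 0) (h : u ∈ K ∙ v) :
    mk K u hu = mk K v hv :=
  Subtype.ext <| show K ∙ u = K ∙ v from Submodule.eq_of_le_of_finrank_eq
    ((span_singleton_le_iff_mem u _).2 h)
    (by rw [finrank_span_singleton hu, finrank_span_singleton hv])

theorem finrank_sup_eq_two {p q : ProjPoint K V} (hpq : p ≠ q) : finrank K ↥(p.1 ⊔ q.1) = 2 := by
  have : FiniteDimensional K p.1 := .of_finrank_eq_succ p.2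
  have : FiniteDimensional K q.1 := .of_finrank_eq_succ q.2
  have hinf : p.1 ⊓ q.1 < p.1 := inf_lt_left.2 fun hle =>
    hpq (Subtype.ext (Submodule.eq_of_le_of_finrank_eq hle (p.2.trans q.2.symm)))
  have := Submodule.finrank_lt_finrank_of_lt hinf
  have := Submodule.finrank_sup_add_finrank_inf_eq p.1 q.1
  omega

end ProjPoint

open ProjPoint

section Collineation

variable {K V : Type*} [Field K] [AddCommGroup V] [Module K V]

def MapsLinesToLines (Ψ : ProjPoint K V → ProjPoint K V) : Prop :=
  ∀ P : Submodule K V, finrank K P = 2 →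
    ∃ Q : Submodule K V, finrank K Q = 2 ∧ ∀ W : ProjPoint K V, W.1 ≤ P → (Ψ W).1 ≤ Q

def spanImage (Ψ : ProjPoint K V → ProjPoint K V) (P : Submodule K V) : Submodule K V :=
  ⨆ (v : V) (hv : v ≠ 0) (_ : v ∈ P), (Ψ (ProjPoint.mk K v hv)).1

theorem le_spanImage (Ψ : ProjPoint K V → ProjPoint K V) {v : V} (hv : v ≠ 0)
    {P : Submodule K V} (h : v ∈ P) : (Ψ (ProjPoint.mk K v hv)).1 ≤ spanImage Ψ P :=
  le_iSup₂_of_le v hv (le_iSup_of_le h le_rfl)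

namespace MapsLinesToLines

variable {Ψ : ProjPoint K V ≃ ProjPoint K V} (hΨ : MapsLinesToLines Ψ)
include hΨ

theorem mk_add_le {u v : V} (hu : u ≠ 0) (hv : v ≠ 0) (huv : u + v ≠ 0) :
    (Ψ (ProjPoint.mk K (u + v) huv)).1 ≤
      (Ψ (ProjPoint.mk K u hu)).1 ⊔ (Ψ (ProjPoint.mk K v hv)).1 := by
  by_cases hpq : ProjPoint.mk K u hu = ProjPoint.mk K v hv
  · have hvu : v ∈ K ∙ u := by
      rw [show K ∙ u = (ProjPoint.mk K u hu).1 from rfl, hpq]; exact mem_span_singleton_self v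
    rw [mk_eq_mk_of_mem huv hu (add_mem (mem_span_singleton_self u) hvu)]
    exact le_sup_left
  obtain ⟨Q, hQ, hPQ⟩ := hΨ _ (finrank_sup_eq_two hpq)
  have : FiniteDimensional K Q := .of_finrank_eq_succ hQ
  have hQeq : (Ψ (ProjPoint.mk K u hu)).1 ⊔ (Ψ (ProjPoint.mk K v hv)).1 = Q :=
    Submodule.eq_of_le_of_finrank_eq (sup_le (hPQ _ le_sup_left) (hPQ _ le_sup_right))
      ((finrank_sup_eq_two (Ψ.injective.ne hpq)).trans hQ.symm)
  rw [hQeq]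
  exact hPQ _ ((span_singleton_le_iff_mem _ _).2
    (add_mem (mem_sup_left (mem_span_singleton_self u))
      (mem_sup_right (mem_span_singleton_self v))))

def preimage (R : Submodule K V) : Submodule K V where
  carrier := {v | ∀ hv : v ≠ 0, (Ψ (ProjPoint.mk K v hv)).1 ≤ R}
  zero_mem' hv := absurd rfl hv
  add_mem' {u v} hu hv huv := by
    by_cases hu0 : u = 0
    · subst hu0; simpa using hv (by simpa using huv)
    by_cases hv0 : v = 0
    · subst hv0; simpa using hu (by simpa using huv)
    exact (hΨ.mk_add_le hu0 hv0 huv).trans (sup_le (hu hu0) (hv hv0))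
  smul_mem' c v hv hcv := by
    have hv0 : v ≠ 0 := right_ne_zero_of_smul hcv
    rw [mk_eq_mk_of_mem hcv hv0 (smul_mem _ c (mem_span_singleton_self v))]
    exact hv hv0

theorem gc : GaloisConnection (spanImage Ψ) hΨ.preimage := fun _ _ =>
  ⟨fun h _ hvP hv => (le_spanImage Ψ hv hvP).trans h,
    fun h => iSup₂_le fun _ hv => iSup_le fun hvP => h hvP hv⟩

theorem spanImage_preimage (R : Submodule K V) : spanImage Ψ (hΨ.preimage R) = R := by
  refine le_antisymm (hΨ.gc.l_u_le R) fun w hw => ?_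
  by_cases hw0 : w = 0
  · exact hw0 ▸ zero_mem _
  obtain ⟨u, hu, hΨu⟩ := exists_eq_mk (Ψ.symm (ProjPoint.mk K w hw0))
  have hΨu' : Ψ (ProjPoint.mk K u hu) = ProjPoint.mk K w hw0 := by rw [← hΨu, Ψ.apply_symm_apply]
  have hmem : u ∈ hΨ.preimage R := fun _ => by
    rw [hΨu']; exact (span_singleton_le_iff_mem _ _).2 hw
  exact le_spanImage Ψ hu hmem (by rw [hΨu']; exact mem_span_singleton_self w)

variable [FiniteDimensional K V]

theorem finrank_spanImage_le (P : Submodule K V) : finrank K (spanImage Ψ P) ≤ finrank K P := by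
  let b := Module.finBasis K P
  choose w hw hΨw using fun i =>
    exists_eq_mk (Ψ (ProjPoint.mk K (b i : V) (by simp [b.ne_zero i])))
  have hP : P ≤ hΨ.preimage (span K (Set.range w)) := by
    have hspan : span K (Set.range fun i => (b i : V)) = P := by
      rw [Set.range_comp' .., ← P.coe_subtype, span_image, b.span_eq, Submodule.map_top,
        range_subtype]
    refine hspan.ge.trans (span_le.2 ?_)
    rintro _ ⟨i, rfl⟩ _
    rw [hΨw i]
    exact span_mono (Set.singleton_subset_iff.2 ⟨i, rfl⟩)
  calc finrank K (spanImage Ψ P) ≤ finrank K (span K (Set.range w)) :=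
        Submodule.finrank_mono ((hΨ.gc _ _).2 hP)
    _ ≤ Fintype.card (Fin (finrank K P)) := finrank_range_le_card w
    _ = finrank K P := Fintype.card_fin _

theorem finrank_spanImage (P : Submodule K V) : finrank K (spanImage Ψ P) = finrank K P := by
  obtain ⟨Q, hPQ⟩ := P.exists_isCompl
  have htop : spanImage Ψ P ⊔ spanImage Ψ Q = ⊤ := by
    rw [← hΨ.gc.l_sup, hPQ.sup_eq_top]
    exact top_unique ((hΨ.spanImage_preimage ⊤).ge.trans (hΨ.gc.monotone_l le_top))
  have hsup := Submodule.finrank_add_le_finrank_add_finrank (spanImage Ψ P) (spanImage Ψ Q)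
  rw [htop, finrank_top, ← Submodule.finrank_add_eq_of_isCompl hPQ] at hsup
  have := hΨ.finrank_spanImage_le P
  have := hΨ.finrank_spanImage_le Q
  omega

theorem preimage_spanImage (P : Submodule K V) : hΨ.preimage (spanImage Ψ P) = P := by
  refine (Submodule.eq_of_le_of_finrank_eq (hΨ.gc.le_u_l P) ?_).symm
  rw [← hΨ.finrank_spanImage (hΨ.preimage _), hΨ.spanImage_preimage, hΨ.finrank_spanImage]

def orderIso : Submodule K V ≃o Submodule K V where
  toFun := spanImage Ψ
  invFun := hΨ.preimage
  left_inv := hΨ.preimage_spanImage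
  right_inv := hΨ.spanImage_preimage
  map_rel_iff' {P Q} := show spanImage Ψ P ≤ spanImage Ψ Q ↔ P ≤ Q by
    rw [hΨ.gc, hΨ.preimage_spanImage]

theorem orderIso_span_singleton {v : V} (hv : v ≠ 0) :
    hΨ.orderIso (K ∙ v) = (Ψ (ProjPoint.mk K v hv)).1 :=
  le_antisymm ((hΨ.gc _ _).2 ((span_singleton_le_iff_mem _ _).2 fun _ => le_rfl))
    (le_spanImage Ψ hv (mem_span_singleton_self v))

end MapsLinesToLines

end Collineation

section Frame

variable {ι K V : Type*} [Field K] [AddCommGroup V] [Module K V]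

theorem OrderIso.exists_map_span_singleton (e : Submodule K V ≃o Submodule K V) (v : V) :
    ∃ w : V, e (K ∙ v) = K ∙ w := by
  by_cases hv : v = 0
  · exact ⟨0, by simp [hv]⟩
  obtain ⟨w, -, hw⟩ := (atom_iff_nonzero_span _).1 ((e.isAtom_iff _).2 (nonzero_span_atom v hv))
  exact ⟨w, hw⟩

theorem OrderIso.map_span_image (e : Submodule K V ≃o Submodule K V) {v w : ι → V}
    (h : ∀ i, e (K ∙ v i) = K ∙ w i) (s : Set ι) : e (span K (v '' s)) = span K (w '' s) := by
  rw [span_eq_iSup_of_singleton_spans, span_eq_iSup_of_singleton_spans, iSup_image, iSup_image,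
    OrderIso.map_iSup₂]
  simp only [h]

namespace Module.Basis

variable (b : Basis ι K V) {i j k : ι}

theorem eq_of_span_add_smul_eq (hij : i ≠ j) {y y' : K}
    (h : K ∙ (b i + y • b j) = K ∙ (b i + y' • b j)) : y = y' := by
  obtain ⟨c, hc⟩ := mem_span_singleton.1 (h ▸ mem_span_singleton_self (b i + y • b j))
  have hci := congrArg (b.coord i) hc
  have hcj := congrArg (b.coord j) hc
  simp [hij, hij.symm] at hci hcj
  rw [← hcj, hci, one_mul]

-- Each point below is the meet of two lines through points whose images under a
-- frame-preserving collineation are already known; `span_add_add_smul_eq_inf` and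
-- `span_add_mul_smul_eq_inf` construct `x + y` and `x * y` on the line through `b i` and `b j`.
theorem span_sub_smul_eq_inf (hij : i ≠ j) (hik : i ≠ k) (y : K) :
    K ∙ (b k - y • b j) = (K ∙ (b i + y • b j) ⊔ K ∙ (b i + b k)) ⊓ (K ∙ b j ⊔ K ∙ b k) := by
  refine (span_singleton_sup_inf_eq (b.coord i) ?_ ?_ ?_ ?_).symm
  · simp [hij, hik]
  · simp [hij.symm]
  · simp [hij.symm, hik.symm]
  · exact mem_span_singleton_sup_span_singleton.2 ⟨-y, 1, by module⟩

theorem span_add_smul_add_eq_inf (hij : i ≠ j) (hik : i ≠ k) (hjk : j ≠ k) (x : K) :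
    K ∙ (b i + x • b j + b k) = (K ∙ (b i + x • b j) ⊔ K ∙ b k) ⊓ (K ∙ b j ⊔ K ∙ (b i + b k)) := by
  refine (span_singleton_sup_inf_eq (b.coord i - b.coord k) ?_ ?_ ?_ ?_).symm
  · simp [hij, hik, hjk, hik.symm]
  · simp [hij.symm, hik, hjk.symm]
  · simp [hij.symm, hik.symm, hjk.symm]
    module
  · exact mem_span_singleton_sup_span_singleton.2 ⟨x, 1, by module⟩

theorem span_add_add_smul_eq_inf (hik : i ≠ k) (hjk : j ≠ k) (x y : K) :
    K ∙ (b i + (x + y) • b j) =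
      (K ∙ (b k - y • b j) ⊔ K ∙ (b i + x • b j + b k)) ⊓ (K ∙ b i ⊔ K ∙ b j) := by
  refine (span_singleton_sup_inf_eq (b.coord k) ?_ ?_ ?_ ?_).symm
  · simp [hik, hjk]
  · simp [hjk]
  · simp [hik, hjk]
    module
  · exact mem_span_singleton_sup_span_singleton.2 ⟨1, x + y, by module⟩

theorem span_add_smul_eq_inf (hij : i ≠ j) (hjk : j ≠ k) (x : K) :
    K ∙ (b i + x • b k) = (K ∙ (b j - b k) ⊔ K ∙ (b i + x • b j)) ⊓ (K ∙ b i ⊔ K ∙ b k) := by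
  refine (span_singleton_sup_inf_eq (b.coord j) ?_ ?_ ?_ ?_).symm
  · simp [hij.symm, hjk]
  · simp [hjk.symm]
  · simp [hij.symm, hjk.symm]
    module
  · exact mem_span_singleton_sup_span_singleton.2 ⟨1, x, by module⟩

theorem span_add_mul_smul_eq_inf (hik : i ≠ k) (hjk : j ≠ k) (x y : K) :
    K ∙ (b i + (x * y) • b j) =
      (K ∙ (b k - y • b j) ⊔ K ∙ (b i + x • b k)) ⊓ (K ∙ b i ⊔ K ∙ b j) := by
  refine (span_singleton_sup_inf_eq (b.coord k) ?_ ?_ ?_ ?_).symm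
  · simp [hik, hjk]
  · simp [hjk]
  · simp [hik, hjk]
    module
  · exact mem_span_singleton_sup_span_singleton.2 ⟨1, x * y, by module⟩

variable [DecidableEq ι]

theorem span_add_sum_insert_eq_inf (x : ι → K) {s : Finset ι} {a : ι} (hia : i ≠ a)
    (his : i ∉ s) (has : a ∉ s) :
    K ∙ (b i + ∑ j ∈ s, x j • b j + x a • b a) =
      (K ∙ b a ⊔ K ∙ (b i + ∑ j ∈ s, x j • b j)) ⊓ (K ∙ (b i + x a • b a) ⊔ span K (b '' s)) := by
  refine (span_singleton_sup_inf_eq (b.coord a - x a • b.coord i) (sup_le ?_ ?_) ?_ ?_ ?_).symm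
  · simp [hia, hia.symm]
  · rw [span_le]
    rintro _ ⟨l, hl, rfl⟩
    simp [ne_of_mem_of_not_mem hl has, ne_of_mem_of_not_mem hl his]
  · simp [hia]
  · simp [Finsupp.single_apply, hia, hia.symm, his, has]
  · exact mem_sup.2 ⟨b i + x a • b a, mem_span_singleton_self _, ∑ j ∈ s, x j • b j,
      sum_mem fun l hl => smul_mem _ _ (subset_span ⟨l, hl, rfl⟩), by abel⟩

variable [Fintype ι]

theorem span_add_eq_inf (hij : i ≠ j) :
    K ∙ (b i + b j) =
      (K ∙ b i ⊔ K ∙ b j) ⊓ (K ∙ (∑ l, b l) ⊔ span K (b '' ↑({i, j}ᶜ : Finset ι))) := by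
  refine (span_singleton_sup_inf_eq (b.coord i - b.coord j) (sup_le ?_ ?_) ?_ ?_ ?_).symm
  · simp
  · rw [span_le]
    rintro _ ⟨l, hl, rfl⟩
    simp_all [eq_comm]
  · simp [hij.symm]
  · simp [hij, hij.symm]
    module
  · refine mem_sup.2 ⟨∑ l, b l, mem_span_singleton_self _, -∑ l ∈ {i, j}ᶜ, b l,
      neg_mem (sum_mem fun l hl => subset_span ⟨l, hl, rfl⟩), ?_⟩
    rw [← Finset.sum_add_sum_compl {i, j} b, Finset.sum_pair hij]
    abel

end Module.Basis

variable [Fintype ι]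

theorem exists_ne_ne_of_three_le_card (hι : 3 ≤ Fintype.card ι) (i j : ι) :
    ∃ k, i ≠ k ∧ j ≠ k := by
  obtain ⟨k, hki, hkj⟩ := ENat.exists_ne_ne_of_three_le (by simpa using hι) i j
  exact ⟨k, hki.symm, hkj.symm⟩

structure MapsFrame (e : Submodule K V ≃o Submodule K V) (b b' : Basis ι K V) : Prop where
  map_span_basis : ∀ i, e (K ∙ b i) = K ∙ b' i
  map_span_sum : e (K ∙ ∑ i, b i) = K ∙ ∑ i, b' i

namespace MapsFrame

variable {e : Submodule K V ≃o Submodule K V} {b b' : Basis ι K V} (h : MapsFrame e b b')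
  {i j k : ι}
include h

theorem map_span_image (s : Set ι) : e (span K (b '' s)) = span K (b' '' s) :=
  e.map_span_image h.map_span_basis s

theorem exists_map_add_smul (hij : i ≠ j) (x : K) :
    ∃ y : K, e (K ∙ (b i + x • b j)) = K ∙ (b' i + y • b' j) := by
  obtain ⟨w, hw⟩ := e.exists_map_span_singleton (b i + x • b j)
  have hle : K ∙ (b i + x • b j) ≤ K ∙ b i ⊔ K ∙ b j :=
    (span_singleton_le_iff_mem _ _).2
      (mem_span_singleton_sup_span_singleton.2 ⟨1, x, by rw [one_smul]⟩)
  replace hle := e.monotone hle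
  rw [e.map_sup, hw, h.map_span_basis, h.map_span_basis, span_singleton_le_iff_mem] at hle
  obtain ⟨α, β, rfl⟩ := mem_span_singleton_sup_span_singleton.1 hle
  have hα : α ≠ 0 := by
    rintro rfl
    have hj : K ∙ (b i + x • b j) ≤ K ∙ b j := by
      rw [← e.le_iff_le, hw, h.map_span_basis, zero_smul, zero_add]
      exact span_singleton_smul_le K β (b' j)
    obtain ⟨c, hc⟩ := mem_span_singleton.1 ((span_singleton_le_iff_mem _ _).1 hj)
    simpa [hij] using congrArg (b.coord i) hc
  refine ⟨β / α, ?_⟩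
  have hαβ : α • b' i + β • b' j = α • (b' i + (β / α) • b' j) := by
    rw [smul_add, smul_smul, mul_div_cancel₀ _ hα]
  rw [hw, hαβ, span_singleton_smul_eq (IsUnit.mk0 α hα)]

noncomputable def coordMap (hij : i ≠ j) (x : K) : K := (h.exists_map_add_smul hij x).choose

theorem map_add_smul (hij : i ≠ j) (x : K) :
    e (K ∙ (b i + x • b j)) = K ∙ (b' i + h.coordMap hij x • b' j) :=
  (h.exists_map_add_smul hij x).choose_spec

theorem coordMap_eq (hij : i ≠ j) {x y : K}
    (hxy : e (K ∙ (b i + x • b j)) = K ∙ (b' i + y • b' j)) : h.coordMap hij x = y :=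
  b'.eq_of_span_add_smul_eq hij ((h.map_add_smul hij x).symm.trans hxy)

theorem coordMap_zero (hij : i ≠ j) : h.coordMap hij 0 = 0 :=
  h.coordMap_eq hij (by simpa using h.map_span_basis i)

variable [DecidableEq ι]

theorem map_add (hij : i ≠ j) : e (K ∙ (b i + b j)) = K ∙ (b' i + b' j) := by
  rw [b.span_add_eq_inf hij, e.map_inf, e.map_sup, e.map_sup, h.map_span_basis, h.map_span_basis,
    h.map_span_sum, h.map_span_image, ← b'.span_add_eq_inf hij]

theorem coordMap_one (hij : i ≠ j) : h.coordMap hij 1 = 1 :=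
  h.coordMap_eq hij (by simpa using h.map_add hij)

theorem map_sub_smul (hij : i ≠ j) (hik : i ≠ k) (y : K) :
    e (K ∙ (b k - y • b j)) = K ∙ (b' k - h.coordMap hij y • b' j) := by
  rw [b.span_sub_smul_eq_inf hij hik, e.map_inf, e.map_sup, e.map_sup, h.map_add_smul hij,
    h.map_add hik, h.map_span_basis, h.map_span_basis, ← b'.span_sub_smul_eq_inf hij hik]

theorem coordMap_add (hij : i ≠ j) (hik : i ≠ k) (hjk : j ≠ k) (x y : K) :
    h.coordMap hij (x + y) = h.coordMap hij x + h.coordMap hij y := by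
  have hA : e (K ∙ (b i + x • b j + b k)) = K ∙ (b' i + h.coordMap hij x • b' j + b' k) := by
    rw [b.span_add_smul_add_eq_inf hij hik hjk, e.map_inf, e.map_sup, e.map_sup, h.map_add_smul hij,
      h.map_add hik, h.map_span_basis, h.map_span_basis, ← b'.span_add_smul_add_eq_inf hij hik hjk]
  refine h.coordMap_eq hij ?_
  rw [b.span_add_add_smul_eq_inf hik hjk, e.map_inf, e.map_sup, e.map_sup, hA,
    h.map_sub_smul hij hik, h.map_span_basis, h.map_span_basis,
    ← b'.span_add_add_smul_eq_inf hik hjk]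

theorem coordMap_neg_one (hij : i ≠ j) (hik : i ≠ k) (hjk : j ≠ k) : h.coordMap hij (-1) = -1 := by
  have := h.coordMap_add hij hik hjk 1 (-1)
  rw [add_neg_cancel, h.coordMap_zero, h.coordMap_one] at this
  linear_combination -this

theorem coordMap_mul (hij : i ≠ j) (hik : i ≠ k) (hjk : j ≠ k) (x y : K) :
    h.coordMap hij (x * y) = h.coordMap hij x * h.coordMap hij y := by
  have hD : e (K ∙ (b j - b k)) = K ∙ (b' j - b' k) := by
    simpa [h.coordMap_neg_one hjk hij.symm hik.symm, ← sub_eq_add_neg] using h.map_add_smul hjk (-1)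
  have hA : e (K ∙ (b i + x • b k)) = K ∙ (b' i + h.coordMap hij x • b' k) := by
    rw [b.span_add_smul_eq_inf hij hjk, e.map_inf, e.map_sup, e.map_sup, hD, h.map_add_smul hij,
      h.map_span_basis, h.map_span_basis, ← b'.span_add_smul_eq_inf hij hjk]
  refine h.coordMap_eq hij ?_
  rw [b.span_add_mul_smul_eq_inf hik hjk, e.map_inf, e.map_sup, e.map_sup, hA,
    h.map_sub_smul hij hik, h.map_span_basis, h.map_span_basis,
    ← b'.span_add_mul_smul_eq_inf hik hjk]

noncomputable def coordRingHom (hι : 3 ≤ Fintype.card ι) (hij : i ≠ j) : K →+* K where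
  toFun := h.coordMap hij
  map_one' := h.coordMap_one hij
  map_mul' x y := by
    obtain ⟨k, hik, hjk⟩ := exists_ne_ne_of_three_le_card hι i j
    exact h.coordMap_mul hij hik hjk x y
  map_zero' := h.coordMap_zero hij
  map_add' x y := by
    obtain ⟨k, hik, hjk⟩ := exists_ne_ne_of_three_le_card hι i j
    exact h.coordMap_add hij hik hjk x y

end MapsFrame

end Frame

namespace MapsFrame

variable {ι V : Type*} [Fintype ι] [DecidableEq ι] [AddCommGroup V] [Module ℝ V]
  {e : Submodule ℝ V ≃o Submodule ℝ V} {b b' : Basis ι ℝ V} (h : MapsFrame e b b')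
  (hι : 3 ≤ Fintype.card ι)
include h hι

theorem coordMap_eq_self {i j : ι} (hij : i ≠ j) (x : ℝ) : h.coordMap hij x = x :=
  RingHom.congr_fun (Subsingleton.elim (h.coordRingHom hι hij) (RingHom.id ℝ)) x

theorem map_add_sum (x : ι → ℝ) {i : ι} {s : Finset ι} (his : i ∉ s) :
    e (ℝ ∙ (b i + ∑ j ∈ s, x j • b j)) = ℝ ∙ (b' i + ∑ j ∈ s, x j • b' j) := by
  induction s using Finset.induction_on with
  | empty => simpa using h.map_span_basis i
  | insert a s has ih =>
    have hia : i ≠ a := fun hia => his (hia ▸ Finset.mem_insert_self a s)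
    have his' : i ∉ s := fun hi => his (Finset.mem_insert_of_mem hi)
    have hsum (c : Basis ι ℝ V) :
        c i + ∑ j ∈ insert a s, x j • c j = c i + ∑ j ∈ s, x j • c j + x a • c a := by
      rw [Finset.sum_insert has]; abel
    have hline : e (ℝ ∙ (b i + x a • b a)) = ℝ ∙ (b' i + x a • b' a) := by
      rw [h.map_add_smul hia, h.coordMap_eq_self hι hia]
    rw [hsum, hsum, b.span_add_sum_insert_eq_inf x hia his' has, e.map_inf, e.map_sup, e.map_sup,
      h.map_span_basis, ih his', hline, h.map_span_image,
      ← b'.span_add_sum_insert_eq_inf x hia his' has]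

theorem map_span_singleton (v : V) : e (ℝ ∙ v) = ℝ ∙ b.equiv b' (Equiv.refl ι) v := by
  by_cases hv : v = 0
  · simp [hv]
  obtain ⟨i, hi⟩ := Finsupp.ne_iff.1 (b.repr.map_ne_zero_iff.2 hv)
  have hdecomp (c : Basis ι ℝ V) : ∑ j, b.repr v j • c j =
      b.repr v i • (c i + ∑ j ∈ Finset.univ.erase i, (b.repr v j / b.repr v i) • c j) := by
    rw [← Finset.add_sum_erase _ _ (Finset.mem_univ i), smul_add, Finset.smul_sum]
    simp [smul_smul, mul_div_cancel₀ _ hi]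
  have hΛ : b.equiv b' (Equiv.refl ι) v = ∑ j, b.repr v j • b' j := by
    calc b.equiv b' (Equiv.refl ι) v = b.equiv b' (Equiv.refl ι) (∑ j, b.repr v j • b j) := by
          rw [b.sum_repr]
      _ = ∑ j, b.repr v j • b' j := by
          rw [map_sum]; simp only [map_smul, Basis.equiv_apply, Equiv.refl_apply]
  rw [hΛ, hdecomp, span_singleton_smul_eq (IsUnit.mk0 _ hi)]
  conv_lhs => rw [← b.sum_repr v, hdecomp, span_singleton_smul_eq (IsUnit.mk0 _ hi)]
  exact h.map_add_sum hι _ (Finset.notMem_erase i _)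

end MapsFrame

theorem OrderIso.exists_mapsFrame {ι K V : Type*} [Fintype ι] [Field K] [AddCommGroup V]
    [Module K V] [FiniteDimensional K V] (e : Submodule K V ≃o Submodule K V) (b : Basis ι K V) :
    ∃ b' : Basis ι K V, MapsFrame e b b' := by
  classical
  choose w hw using fun i => e.exists_map_span_singleton (b i)
  have hspan : ⊤ ≤ span K (Set.range w) := by
    rw [← Set.image_univ, ← e.map_span_image hw, Set.image_univ, b.span_eq, e.map_top]
  let bw := basisOfTopLeSpanOfCardEqFinrank w hspan (finrank_eq_card_basis b).symm
  have hbw : ⇑bw = w := coe_basisOfTopLeSpanOfCardEqFinrank w hspan _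
  obtain ⟨u, hu⟩ := e.exists_map_span_singleton (∑ i, b i)
  have hc (i : ι) : bw.repr u i ≠ 0 := by
    intro hci
    have hu_mem : u ∈ span K (w '' {i}ᶜ) := by
      rw [← hbw]
      exact bw.mem_span_image.2 fun l hl hli => Finsupp.mem_support_iff.1 hl (hli ▸ hci)
    have hle : K ∙ ∑ l, b l ≤ span K (b '' {i}ᶜ) := by
      rwa [← e.le_iff_le, hu, e.map_span_image hw, span_singleton_le_iff_mem]
    have hsupp := b.mem_span_image.1 ((span_singleton_le_iff_mem _ _).1 hle)
    exact hsupp (by simp [Finsupp.single_apply]) rfl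
  refine ⟨bw.unitsSMul fun i => Units.mk0 _ (hc i), ⟨fun i => ?_, ?_⟩⟩
  · rw [hw, Basis.unitsSMul_apply, Units.smul_mk0, span_singleton_smul_eq (IsUnit.mk0 _ (hc i)),
      hbw]
  · simp_rw [hu, Basis.unitsSMul_apply, Units.smul_mk0, bw.sum_repr]

theorem MapsLinesToLines.exists_linearEquiv {V : Type*} [AddCommGroup V] [Module ℝ V]
    [FiniteDimensional ℝ V] (hV : 3 ≤ finrank ℝ V) {Ψ : ProjPoint ℝ V ≃ ProjPoint ℝ V}
    (hΨ : MapsLinesToLines Ψ) :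
    ∃ Λ : V ≃ₗ[ℝ] V, ∀ W : ProjPoint ℝ V, (Ψ W).1 = Submodule.map (Λ : V →ₗ[ℝ] V) W.1 := by
  let b := finBasis ℝ V
  obtain ⟨b', h⟩ := hΨ.orderIso.exists_mapsFrame b
  refine ⟨b.equiv b' (Equiv.refl _), fun W => ?_⟩
  obtain ⟨v, hv, rfl⟩ := exists_eq_mk W
  rw [← hΨ.orderIso_span_singleton hv, h.map_span_singleton (by simpa using hV) v,
    show (ProjPoint.mk ℝ v hv).1 = ℝ ∙ v from rfl, Submodule.map_span, Set.image_singleton]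
  rfl

theorem fundamental_theorem_projective_geometry (n : ℕ) (hn : 3 ≤ n)
    (Ψ : {W : Submodule ℝ (Fin n → ℝ) // Module.finrank ℝ W = 1} ≃
         {W : Submodule ℝ (Fin n → ℝ) // Module.finrank ℝ W = 1})
    (hΨ : ∀ P : Submodule ℝ (Fin n → ℝ), Module.finrank ℝ P = 2 →
      ∃ Q : Submodule ℝ (Fin n → ℝ), Module.finrank ℝ Q = 2 ∧
        ∀ W : {W : Submodule ℝ (Fin n → ℝ) // Module.finrank ℝ W = 1},
          W.1 ≤ P → (Ψ W).1 ≤ Q) :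
    ∃ Λ : (Fin n → ℝ) ≃ₗ[ℝ] (Fin n → ℝ),
      ∀ W : {W : Submodule ℝ (Fin n → ℝ) // Module.finrank ℝ W = 1},
        (Ψ W).1 = Submodule.map (Λ : (Fin n → ℝ) →ₗ[ℝ] (Fin n → ℝ)) W.1 :=
  MapsLinesToLines.exists_linearEquiv (by simpa using hn) hΨ
end

section
/- For nonzero u, v ∈ H with u/‖u‖ ≠ ±v/‖v‖, the set {a·u + a'·v : a ≥ 0, a' ≥ 0} ∖ {0}, normalized to the unit sphere of H, equals the closed minor arc of the great circle through u/‖u‖ and v/‖v‖, i.e., {(cos t)·û + (sin t)·ŵ : t ∈ [0, θ]}, where û = u/‖u‖, v̂ = v/‖v‖, θ = arccos⟨û, v̂⟩, and ŵ is the unit vector in span(u,v) orthogonal to û with ⟨ŵ, v⟩ > 0. -/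
open Real

set_option maxHeartbeats 800000

lemma key_ineq {p q r c s : ℝ} (hs : 0 < s) (hq : 0 ≤ q) (hr : 0 < r)
    (h1 : p^2 + q^2 = r^2) (h2 : c^2 + s^2 = 1) (h3 : c*q ≤ p*s) : c*r ≤ p := by
  rcases le_or_gt c 0 with hc | hc
  · rcases le_or_gt 0 p with hp | hp
    · have : c*r ≤ 0 := mul_nonpos_of_nonpos_of_nonneg hc hr.le
      linarith
    · have h4 : p*s < 0 := mul_neg_of_neg_of_pos hp hs
      have h6 : (p*s)^2 ≤ (c*q)^2 := by
        nlinarith [mul_nonneg (sub_nonneg.2 h3) (show (0:ℝ) ≤ -(p*s + c*q) by linarith)]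
      have h7 : p^2 ≤ (c*r)^2 := by nlinarith
      have h8 : c*r ≤ 0 := mul_nonpos_of_nonpos_of_nonneg hc hr.le
      by_contra hcon; push_neg at hcon
      have h9 : (c*r - p) * (c*r + p) < 0 :=
        mul_neg_of_pos_of_neg (by linarith) (by linarith)
      nlinarith
  · have hp : 0 < p := by
      by_contra h; push_neg at h
      have hps : p * s ≤ 0 := mul_nonpos_of_nonpos_of_nonneg h hs.le
      have hcq : 0 ≤ c * q := mul_nonneg hc.le hq
      have hq2 : c * (q*q) ≤ 0 := by nlinarith
      have hq0 : q = 0 := by nlinarith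
      have hp2 : p = 0 := by nlinarith
      nlinarith [mul_pos hr hr]
    by_contra hcon; push_neg at hcon
    have h4 : p^2 < (c*r)^2 := by nlinarith [mul_pos hc hr]
    have hcq : 0 ≤ c * q := mul_nonneg hc.le hq
    have h5 : (c*q)^2 ≤ (p*s)^2 := by
      nlinarith [mul_le_mul h3 h3 hcq (mul_pos hp hs).le]
    nlinarith


lemma aux_one_sub_sq {c : ℝ} (h1 : -1 < c) (h2 : c < 1) : 0 < 1 - c^2 := by nlinarith

lemma aux_Npos {N c s : ℝ} (hs2 : s^2 = 1 - c^2) (h5 : 0 < -(N*c)*c + N) : 0 < N := by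
  by_contra hcon; push_neg at hcon
  nlinarith [mul_nonpos_of_nonpos_of_nonneg hcon (sq_nonneg s)]

lemma aux_ple {p q r : ℝ} (h : p^2 + q^2 = r^2) (hr : 0 < r) : -r ≤ p ∧ p ≤ r := by
  constructor <;> nlinarith [sq_nonneg (p + r), sq_nonneg (p - r), sq_nonneg q]

theorem cone_normalized_is_geodesic_arc
    (H : Type*) [NormedAddCommGroup H] [InnerProductSpace ℝ H]
    (u v : H) (hu : u ≠ 0) (hv : v ≠ 0)
    (hne : ‖u‖⁻¹ • u ≠ ‖v‖⁻¹ • v) (hna : ‖u‖⁻¹ • u ≠ -(‖v‖⁻¹ • v))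
    (w : H) (hw1 : ‖w‖ = 1) (hw2 : w ∈ Submodule.span ℝ {u, v})
    (hw3 : (inner ℝ w (‖u‖⁻¹ • u) : ℝ) = 0) (hw4 : (0 : ℝ) < inner ℝ w v) :
    {x : H | ∃ a a' : ℝ, 0 ≤ a ∧ 0 ≤ a' ∧ a • u + a' • v ≠ 0 ∧
        x = ‖a • u + a' • v‖⁻¹ • (a • u + a' • v)} =
    {x : H | ∃ t : ℝ, 0 ≤ t ∧
        t ≤ Real.arccos (inner ℝ (‖u‖⁻¹ • u) (‖v‖⁻¹ • v) : ℝ) ∧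
        x = Real.cos t • (‖u‖⁻¹ • u) + Real.sin t • w} := by
  have hun : ‖u‖ ≠ 0 := norm_ne_zero_iff.mpr hu
  have hvn : ‖v‖ ≠ 0 := norm_ne_zero_iff.mpr hv
  obtain ⟨e, he⟩ : ∃ x : H, ‖u‖⁻¹ • u = x := ⟨_, rfl⟩
  obtain ⟨f, hf⟩ : ∃ x : H, ‖v‖⁻¹ • v = x := ⟨_, rfl⟩
  rw [he, hf] at hne hna ⊢
  rw [he] at hw3
  have hen : ‖e‖ = 1 := by
    rw [← he, norm_smul, norm_inv, norm_norm, inv_mul_cancel₀ hun]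
  have hfn : ‖f‖ = 1 := by
    rw [← hf, norm_smul, norm_inv, norm_norm, inv_mul_cancel₀ hvn]
  obtain ⟨c, hc⟩ : ∃ x : ℝ, (inner ℝ e f : ℝ) = x := ⟨_, rfl⟩
  rw [hc]
  have hc1 : c < 1 := by
    rw [← hc]; exact (inner_lt_one_iff_real_of_norm_eq_one hen hfn).mpr hne
  have hc2 : -1 < c := by
    have h := (inner_lt_one_iff_real_of_norm_eq_one hen (by rw [norm_neg]; exact hfn)).mpr
      (by simpa using hna)
    rw [inner_neg_right, hc] at h
    linarith
  obtain ⟨s, hsdef⟩ : ∃ x : ℝ, Real.sqrt (1 - c^2) = x := ⟨_, rfl⟩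
  have h1c : 0 < 1 - c^2 := aux_one_sub_sq hc2 hc1
  have hs2 : s^2 = 1 - c^2 := by rw [← hsdef]; exact Real.sq_sqrt h1c.le
  have hs : 0 < s := by rw [← hsdef]; exact Real.sqrt_pos.mpr h1c
  have hee : (inner ℝ e e : ℝ) = 1 := by
    rw [real_inner_self_eq_norm_sq, hen]; norm_num
  have hff : (inner ℝ f f : ℝ) = 1 := by
    rw [real_inner_self_eq_norm_sq, hfn]; norm_num
  have hww : (inner ℝ w w : ℝ) = 1 := by
    rw [real_inner_self_eq_norm_sq, hw1]; norm_num
  have hfe : (inner ℝ f e : ℝ) = c := by rw [real_inner_comm]; exact hc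
  have hew : (inner ℝ e w : ℝ) = 0 := by rw [real_inner_comm]; exact hw3
  have hue : u = ‖u‖ • e := by rw [← he, smul_smul, mul_inv_cancel₀ hun, one_smul]
  have hvf : v = ‖v‖ • f := by rw [← hf, smul_smul, mul_inv_cancel₀ hvn, one_smul]
  -- decompose w in the e, f coordinates
  obtain ⟨m, n, hmn⟩ := Submodule.mem_span_pair.mp hw2
  obtain ⟨M, hM⟩ : ∃ x : ℝ, m * ‖u‖ = x := ⟨_, rfl⟩
  obtain ⟨N, hN⟩ : ∃ x : ℝ, n * ‖v‖ = x := ⟨_, rfl⟩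
  have hMe : M • e = m • u := by
    rw [← hM, ← he, smul_smul, mul_assoc, mul_inv_cancel₀ hun, mul_one]
  have hNf : N • f = n • v := by
    rw [← hN, ← hf, smul_smul, mul_assoc, mul_inv_cancel₀ hvn, mul_one]
  have hwdef : w = M • e + N • f := by rw [hMe, hNf, hmn]
  have hMN1 : M + N * c = 0 := by
    have h := hw3
    rw [hwdef] at h
    simp only [inner_add_left, real_inner_smul_left, hee, hfe] at h
    linarith
  have hwf : (inner ℝ w f : ℝ) = M * c + N := by
    rw [hwdef]
    simp only [inner_add_left, real_inner_smul_left, hff, hc]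
    ring
  have hvpos : 0 < ‖v‖ := norm_pos_iff.mpr hv
  have hNpos : 0 < N := by
    rw [hvf, real_inner_smul_right, hwf] at hw4
    have h5 : 0 < M * c + N := by
      rcases mul_pos_iff.mp hw4 with ⟨_, h⟩ | ⟨h, _⟩
      · exact h
      · linarith
    have hM' : M = -(N * c) := by linarith
    rw [hM'] at h5
    exact aux_Npos hs2 h5
  have hwnorm : M^2 + 2*M*N*c + N^2 = 1 := by
    have h := hww
    rw [hwdef] at h
    simp only [inner_add_left, inner_add_right, real_inner_smul_left, real_inner_smul_right,
      hee, hff, hc, hfe] at h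
    linear_combination h
  have hM' : M = -(N * c) := by linarith
  have hNs : N * s = 1 := by
    have hwnorm' : (-(N*c))^2 + 2*(-(N*c))*N*c + N^2 = 1 := by rw [← hM']; exact hwnorm
    have h6 : (N*s)^2 = 1 := by linear_combination hwnorm' + N^2 * hs2
    have h7 : (N*s - 1)*(N*s + 1) = 0 := by linear_combination h6
    rcases mul_eq_zero.mp h7 with h | h
    · linarith
    · linarith [mul_pos hNpos hs]
  have hMs : M * s = -c := by linear_combination s * hM' - c * hNs
  have hkey : s • w = f - c • e := by
    rw [hwdef, smul_add, smul_smul, smul_smul, mul_comm s M, mul_comm s N, hMs, hNs,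
      one_smul, neg_smul]
    abel
  have hfdec : f = c • e + s • w := by rw [hkey]; abel
  have hnormpq : ∀ p q : ℝ, ‖p • e + q • w‖^2 = p^2 + q^2 := by
    intro p q
    rw [← real_inner_self_eq_norm_sq]
    simp only [inner_add_left, inner_add_right, real_inner_smul_left, real_inner_smul_right,
      hee, hww, hew, hw3]
    ring
  ext x
  simp only [Set.mem_setOf_eq]
  constructor
  · rintro ⟨a, a', ha, ha', hz, rfl⟩
    obtain ⟨α, hα⟩ : ∃ x : ℝ, a * ‖u‖ = x := ⟨_, rfl⟩
    obtain ⟨β, hβ⟩ : ∃ x : ℝ, a' * ‖v‖ = x := ⟨_, rfl⟩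
    have hα0 : 0 ≤ α := by rw [← hα]; exact mul_nonneg ha (norm_nonneg u)
    have hβ0 : 0 ≤ β := by rw [← hβ]; exact mul_nonneg ha' (norm_nonneg v)
    obtain ⟨p, hp⟩ : ∃ x : ℝ, α + β * c = x := ⟨_, rfl⟩
    obtain ⟨q, hq⟩ : ∃ x : ℝ, β * s = x := ⟨_, rfl⟩
    have hzpq : a • u + a' • v = p • e + q • w := by
      rw [hue, hvf, smul_smul, smul_smul, hα, hβ, hfdec, ← hp, ← hq, smul_add,
        smul_smul, smul_smul, add_smul]
      abel
    obtain ⟨r, hrdef⟩ : ∃ x : ℝ, ‖a • u + a' • v‖ = x := ⟨_, rfl⟩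
    have hrpos : 0 < r := by rw [← hrdef]; exact norm_pos_iff.mpr hz
    have hr2 : p^2 + q^2 = r^2 := by
      rw [← hrdef, hzpq, hnormpq]
    have hq0 : 0 ≤ q := by rw [← hq]; exact mul_nonneg hβ0 hs.le
    have hpscq : c * q ≤ p * s := by
      have h8 : p * s - c * q = α * s := by rw [← hp, ← hq]; ring
      linarith [mul_nonneg hα0 hs.le]
    have hcr : c * r ≤ p := key_ineq hs hq0 hrpos hr2 (by linarith) hpscq
    obtain ⟨hpge, hple⟩ := aux_ple hr2 hrpos
    refine ⟨Real.arccos (p / r), Real.arccos_nonneg _, ?_, ?_⟩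
    · have hcpr : c ≤ p / r := (le_div_iff₀ hrpos).mpr (by linarith)
      rw [Real.arccos_eq_pi_div_two_sub_arcsin, Real.arccos_eq_pi_div_two_sub_arcsin]
      have := Real.monotone_arcsin hcpr
      linarith
    · have hb1 : -1 ≤ p / r := by rw [le_div_iff₀ hrpos]; linarith
      have hb2 : p / r ≤ 1 := by rw [div_le_one hrpos]; exact hple
      have hcos : Real.cos (Real.arccos (p / r)) = p / r := Real.cos_arccos hb1 hb2
      have hsin : Real.sin (Real.arccos (p / r)) = q / r := by
        rw [Real.sin_arccos]
        have h9 : 1 - (p / r)^2 = (q / r)^2 := by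
          field_simp
          linarith
        rw [h9, Real.sqrt_sq (div_nonneg hq0 hrpos.le)]
      rw [hcos, hsin, hrdef, hzpq, smul_add, smul_smul, smul_smul,
        inv_mul_eq_div, inv_mul_eq_div]
  · rintro ⟨t, ht0, htθ, rfl⟩
    obtain ⟨θ, hθdef⟩ : ∃ x : ℝ, Real.arccos c = x := ⟨_, rfl⟩
    rw [hθdef] at htθ
    have hθ0 : 0 ≤ θ := by rw [← hθdef]; exact Real.arccos_nonneg c
    have hθπ : θ < π := by
      rcases lt_or_eq_of_le (hθdef ▸ Real.arccos_le_pi c) with h | h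
      · exact h
      · exfalso
        rw [← hθdef] at h
        rw [Real.arccos_eq_pi] at h
        linarith
    have hcosθ : Real.cos θ = c := by
      rw [← hθdef]; exact Real.cos_arccos (by linarith) (by linarith)
    have hsinθ : Real.sin θ = s := by rw [← hθdef, Real.sin_arccos, hsdef]
    have htπ : t ≤ π := le_trans htθ hθπ.le
    have hsint : 0 ≤ Real.sin t := Real.sin_nonneg_of_nonneg_of_le_pi ht0 htπ
    have hsinθt : 0 ≤ Real.sin (θ - t) :=
      Real.sin_nonneg_of_nonneg_of_le_pi (by linarith) (by linarith)
    obtain ⟨b, hb⟩ : ∃ x : ℝ, Real.sin t / s = x := ⟨_, rfl⟩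
    obtain ⟨a0, ha0⟩ : ∃ x : ℝ, Real.sin (θ - t) / s = x := ⟨_, rfl⟩
    have hb0 : 0 ≤ b := by rw [← hb]; exact div_nonneg hsint hs.le
    have ha00 : 0 ≤ a0 := by rw [← ha0]; exact div_nonneg hsinθt hs.le
    have hku : ∀ k : ℝ, (k / ‖u‖) • u = k • e := fun k => by
      rw [← he, smul_smul, div_eq_mul_inv]
    have hkv : ∀ k : ℝ, (k / ‖v‖) • v = k • f := fun k => by
      rw [← hf, smul_smul, div_eq_mul_inv]
    have h1 : b * s = Real.sin t := by rw [← hb]; field_simp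
    have h2 : a0 + b * c = Real.cos t := by
      rw [← ha0, ← hb, Real.sin_sub, hsinθ, hcosθ]
      field_simp
      ring
    have hxeq : (a0 / ‖u‖) • u + (b / ‖v‖) • v = Real.cos t • e + Real.sin t • w := by
      rw [hku, hkv, hfdec, ← h2, ← h1, smul_add, smul_smul, smul_smul, add_smul]
      abel
    have hxnorm : ‖Real.cos t • e + Real.sin t • w‖ = 1 := by
      have h3 := hnormpq (Real.cos t) (Real.sin t)
      have h4 : Real.cos t ^2 + Real.sin t ^2 = 1 := by
        rw [add_comm]; exact Real.sin_sq_add_cos_sq t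
      rw [h4] at h3
      calc ‖Real.cos t • e + Real.sin t • w‖
          = Real.sqrt (‖Real.cos t • e + Real.sin t • w‖^2) :=
            (Real.sqrt_sq (norm_nonneg _)).symm
        _ = 1 := by rw [h3, Real.sqrt_one]
    refine ⟨a0 / ‖u‖, b / ‖v‖, div_nonneg ha00 (norm_nonneg u),
      div_nonneg hb0 (norm_nonneg v), ?_, ?_⟩
    · rw [hxeq]
      intro hcon
      rw [hcon, norm_zero] at hxnorm
      norm_num at hxnorm
    · rw [hxeq, hxnorm, inv_one, one_smul]
end
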